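/- Let 𝒳 be a non-trivial well-pointed coherent category in which the unique morphism X → 1 is a retraction for every X ≇ 0. If 𝒳 is filtral, then for every object X of 𝒳 the space Spec X is a compact Hausdorff space. -/

import Mathlib

open CategoryTheory CategoryTheory.Limits Opposite

universe w' w v u

namespace Paper

variable {C : Type u} [Category.{v} C]

/-- "X ≇ 0": the object `X` is not initial. -/
def NonInitial (X : C) : Prop := IsInitial X → False

/-- The category is non-trivial: `0 ≇ 1`, i.e. no object is both initial and terminal. -/
def NonTrivialCat (C : Type u) [Category.{v} C] : Prop :=
  ∀ X : C, IsInitial X → IsTerminal X → False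

section Terminal
variable (C) [HasTerminal C]

/-- The category is well-pointed: the functor of points `pt = Hom(1, -)` is faithful. -/
def WellPointed : Prop :=
  ∀ ⦃X Y : C⦄ (f g : X ⟶ Y), (∀ p : ⊤_ C ⟶ X, p ≫ f = p ≫ g) → f = g

/-- The unique morphism `X ⟶ 1` is a retraction for every `X ≇ 0`. -/
def EnoughPoints : Prop :=
  ∀ X : C, NonInitial X → Nonempty (SplitEpi (terminal.from X))

end Terminal

/-- `b` is the bottom element of `Sub(X)`. -/
def IsBotIn {X : C} (b : Subobject X) : Prop := ∀ S : Subobject X, b ≤ S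

/-- `S` is an atom of the subobject lattice `Sub(X)`. -/
def IsAtomIn {X : C} (S : Subobject X) : Prop :=
  ¬ IsBotIn S ∧ ∀ T : Subobject X, T < S → IsBotIn T

/-- `Sub(X)` is atomic: every subobject is the supremum of the atoms below it. -/
def AtomicSubobjects (X : C) : Prop :=
  ∀ S : Subobject X, IsLUB {A : Subobject X | IsAtomIn A ∧ A ≤ S} S

/-- `S` is a complemented subobject: it has a complement `T` with `S ⊓ T = ⊥`, `S ⊔ T = ⊤`. -/
def IsComplementedSub {X : C} (S : Subobject X) : Prop :=
  ∃ T m : Subobject X, IsGLB {S, T} m ∧ IsBotIn m ∧ IsLUB {S, T} ⊤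

/-- A (non-empty) filter of the Boolean center `B(X)` of `Sub(X)`. -/
structure CenterFilter (X : C) where
  carrier : Set (Subobject X)
  mem_complemented : ∀ S ∈ carrier, IsComplementedSub S
  nonempty : carrier.Nonempty
  inf_mem : ∀ S ∈ carrier, ∀ T ∈ carrier, ∀ m : Subobject X, IsGLB {S, T} m → m ∈ carrier
  mem_of_le : ∀ S ∈ carrier, ∀ T : Subobject X, IsComplementedSub T → S ≤ T → T ∈ carrier

theorem CenterFilter.ext' {X : C} {F G : CenterFilter X} (h : F.carrier = G.carrier) : F = G := by
  cases F; cases G; cases h; rfl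

/-- Filters of the Boolean center, ordered by reverse inclusion. -/
instance (X : C) : PartialOrder (CenterFilter X) where
  le F G := G.carrier ⊆ F.carrier
  le_refl _ := subset_rfl
  le_trans _ _ _ h1 h2 := fun _ hx => h1 (h2 hx)
  le_antisymm _ _ h1 h2 := CenterFilter.ext' (Set.Subset.antisymm h2 h1)

/-- An object `X` is filtral if `Sub(X)` is isomorphic, as a lattice, to the lattice of
non-empty filters of the Boolean center of `Sub(X)`. -/
def FiltralObject (X : C) : Prop :=
  Nonempty (Subobject X ≃o CenterFilter X)

/-- A category is filtral if every object is covered by a filtral one. -/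
def Filtral (C : Type u) [Category.{v} C] : Prop :=
  ∀ Y : C, ∃ (X : C) (f : X ⟶ Y), Nonempty (RegularEpi f) ∧ FiltralObject X

/-- `Sub(X)` is a complete lattice (every subset has an infimum). -/
def MonoCompleteAt (X : C) : Prop :=
  ∀ s : Set (Subobject X), ∃ m : Subobject X, IsGLB s m

/-- The category is mono-complete: every subobject poset is a complete lattice. -/
def MonoComplete (C : Type u) [Category.{v} C] : Prop := ∀ X : C, MonoCompleteAt X

section Points
variable [HasTerminal C]

/-- `Vs S` is the set of points of `X` factoring through the subobject `S`. -/
def Vs {X : C} (S : Subobject X) : Set (⊤_ C ⟶ X) := {p | S.Factors p}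

open Classical in
/-- `Cg T` is the smallest subobject of `X` through which every point in `T` factors
(defined whenever the relevant infimum exists). -/
noncomputable def Cg {X : C} (T : Set (⊤_ C ⟶ X)) : Subobject X :=
  if h : ∃ m : Subobject X, IsGLB {S : Subobject X | ∀ p ∈ T, S.Factors p} m
  then h.choose else ⊤

/-- The closure operator `cl = Vs ∘ Cg` on the power set of `pt X`. -/
noncomputable def cl {X : C} (T : Set (⊤_ C ⟶ X)) : Set (⊤_ C ⟶ X) := Vs (Cg T)

end Points

/-- Images are stable under pullback (together with finite limits and images, this is
the definition of a regular category). -/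
class StableImages (C : Type u) [Category.{v} C] [HasFiniteLimits C] [HasImages C] : Prop where
  image_pullback : ∀ {X Y Z : C} (f : X ⟶ Y) (g : Z ⟶ Y),
    (Subobject.pullback g).obj (imageSubobject f) = imageSubobject (pullback.snd f g)

/-- The extra structure of a coherent category: each `Sub(X)` has finite joins and these
are preserved by the pullback functors. -/
class CoherentJoins (C : Type u) [Category.{v} C] [HasPullbacks C] : Prop where
  exists_bot : ∀ X : C, ∃ b : Subobject X, IsBotIn b
  exists_sup : ∀ {X : C} (S T : Subobject X), ∃ U : Subobject X, IsLUB {S, T} U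
  pullback_bot : ∀ {X Y : C} (f : X ⟶ Y) (b : Subobject Y),
    IsBotIn b → IsBotIn ((Subobject.pullback f).obj b)
  pullback_sup : ∀ {X Y : C} (f : X ⟶ Y) (S T U : Subobject Y), IsLUB {S, T} U →
    IsLUB {(Subobject.pullback f).obj S, (Subobject.pullback f).obj T}
      ((Subobject.pullback f).obj U)

/-- An internal equivalence relation: a jointly-monic pair which is reflexive, symmetric and
transitive (expressed via generalised elements). -/
structure IsEquivRelPair {R X : C} (r₁ r₂ : R ⟶ X) : Prop where
  jointlyMono : ∀ {Z : C} (a b : Z ⟶ R), a ≫ r₁ = b ≫ r₁ → a ≫ r₂ = b ≫ r₂ → a = b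
  refl : ∀ {Z : C} (a : Z ⟶ X), ∃ h : Z ⟶ R, h ≫ r₁ = a ∧ h ≫ r₂ = a
  symm : ∀ {Z : C} (a b : Z ⟶ X), (∃ h : Z ⟶ R, h ≫ r₁ = a ∧ h ≫ r₂ = b) →
    ∃ h : Z ⟶ R, h ≫ r₁ = b ∧ h ≫ r₂ = a
  trans : ∀ {Z : C} (a b c : Z ⟶ X), (∃ h : Z ⟶ R, h ≫ r₁ = a ∧ h ≫ r₂ = b) →
    (∃ h : Z ⟶ R, h ≫ r₁ = b ∧ h ≫ r₂ = c) →
    ∃ h : Z ⟶ R, h ≫ r₁ = a ∧ h ≫ r₂ = c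

/-- Every internal equivalence relation is effective: it is the kernel pair of its
coequaliser. -/
def EffectiveEquivRels (C : Type u) [Category.{v} C] : Prop :=
  ∀ {R X : C} (r₁ r₂ : R ⟶ X), IsEquivRelPair r₁ r₂ →
    ∃ (Y : C) (q : X ⟶ Y) (w : r₁ ≫ q = r₂ ≫ q),
      Nonempty (IsColimit (Cofork.ofπ q w)) ∧ Nonempty (IsLimit (PullbackCone.mk r₁ r₂ w))

/-- An object is decidable if its diagonal is a complemented subobject of `X ⨯ X`. -/
def DecidableObj [HasBinaryProducts C] (X : C) : Prop :=
  ∃ (Y : C) (g : Y ⟶ X ⨯ X), Nonempty (IsColimit (BinaryCofan.mk (diag X) g))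

/-- An object is pro-decidable if it is a codirected (cofiltered) limit of decidable objects. -/
def ProDecidableObj [HasBinaryProducts C] (X : C) : Prop :=
  ∃ (J : Type v) (_ : SmallCategory J) (_ : IsCofiltered J) (D : J ⥤ C) (c : Cone D),
    (∀ j, DecidableObj (D.obj j)) ∧ Nonempty (IsLimit c) ∧ Nonempty (c.pt ≅ X)


/-!
The closed sets of `Spec X` are the sets `Vs S`, and `Cg ⊣ Vs` is a Galois connection as soon
as `Sub(X)` is complete. In a coherent category in which every non-initial object has a point, a
point lying in a join `S ⊔ T` lies in `S` or in `T`, so finite unions of closed sets are closed.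

Compactness and the Hausdorff property are checked on a filtral cover `q : X₀ ⟶ X`, where
`Sub(X₀) ≅ F(B(X₀))`. Meets in `F(B(X₀))` are the filters generated by unions, so a directed meet
is the bottom filter only if one of its members already is: this gives the finite intersection
property. If `A ⊓ B = ⊥` in `Sub(X₀)`, the filter generated by the filters of `A` and `B`
contains `⊥`, hence there are `a, b` in the Boolean centre with `a ⊓ b = ⊥`; transporting the
principal filters of `a` and `b` back along the isomorphism separates `A` and `B` by complemented
subobjects, whose direct images along `q` separate two distinct points of `X`.
-/

section Subobjects

theorem factors_iff_mk_le {X A : C} (f : A ⟶ X) [Mono f] {S : Subobject X} :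
    S.Factors f ↔ Subobject.mk f ≤ S :=
  ⟨fun h => Subobject.mk_le_of_comm (S.factorThru f h) (S.factorThru_arrow f h),
    fun h => Subobject.factors_of_le f h (Subobject.mk_factors_self f)⟩

theorem factors_id_iff_eq_top {X : C} {S : Subobject X} : S.Factors (𝟙 X) ↔ S = ⊤ := by
  refine ⟨fun h => top_le_iff.mp (Subobject.le_of_factors ?_),
    fun h => h ▸ Subobject.top_factors _⟩
  simpa using Subobject.factors_of_factors_right (⊤ : Subobject X).arrow h

theorem isBotIn_of_le {X : C} {S T : Subobject X} (h : S ≤ T) (hT : IsBotIn T) : IsBotIn S :=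
  fun U => h.trans (hT U)

theorem isBotIn_of_isLUB_pair {X : C} {S T U : Subobject X} (h : IsLUB {S, T} U)
    (hS : IsBotIn S) (hT : IsBotIn T) : IsBotIn U :=
  fun V => h.2 (by rintro W (rfl | rfl); exacts [hS V, hT V])

theorem isBotIn_of_isInitial {X : C} {S : Subobject X} (h : IsInitial (S : C)) : IsBotIn S :=
  fun T => Subobject.le_of_comm (h.to (T : C)) (h.hom_ext _ _)

theorem exists_comp_eq_id_of_isBotIn_top {A W : C} (h : IsBotIn (⊤ : Subobject W)) (m : A ⟶ W)
    [Mono m] : ∃ s : W ⟶ A, s ≫ m = 𝟙 W :=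
  (Subobject.mk_factors_iff m (𝟙 W)).mp
    (Subobject.factors_of_le _ (h _) (Subobject.top_factors _))

theorem eq_of_forall_isBotIn_top [HasEqualizers C] (h : ∀ W : C, IsBotIn (⊤ : Subobject W))
    {Z W : C} (f g : Z ⟶ W) : f = g := by
  obtain ⟨s, hs⟩ := exists_comp_eq_id_of_isBotIn_top (h Z) (equalizer.ι f g)
  calc f = (s ≫ equalizer.ι f g) ≫ f := by rw [hs, Category.id_comp]
    _ = (s ≫ equalizer.ι f g) ≫ g := by rw [Category.assoc, Category.assoc, equalizer.condition]
    _ = g := by rw [hs, Category.id_comp]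

variable [HasPullbacks C]

theorem pullback_factors_iff {X Y W : C} (f : Y ⟶ X) (S : Subobject X) (u : W ⟶ Y) :
    ((Subobject.pullback f).obj S).Factors u ↔ S.Factors (u ≫ f) := by
  have hsq := Subobject.isPullback f S
  refine ⟨fun h => ?_, fun h => (Subobject.factors_iff _ _).mpr
    ⟨hsq.lift (S.factorThru _ h) u (S.factorThru_arrow _ h), hsq.lift_snd _ _ _⟩⟩
  rw [← Subobject.factorThru_arrow _ u h, Category.assoc, ← hsq.w, ← Category.assoc]
  exact Subobject.factors_comp_arrow _

theorem pullback_eq_top_iff_factors {X Y : C} (f : Y ⟶ X) (S : Subobject X) :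
    (Subobject.pullback f).obj S = ⊤ ↔ S.Factors f := by
  rw [← factors_id_iff_eq_top, pullback_factors_iff, Category.id_comp]

end Subobjects

section Points

variable [HasTerminal C]

theorem mk_factors_point_iff {X : C} (p r : ⊤_ C ⟶ X) : (Subobject.mk p).Factors r ↔ r = p := by
  refine ⟨fun h => ?_, fun h => h ▸ Subobject.mk_factors_self p⟩
  obtain ⟨k, hk⟩ : ∃ k : ⊤_ C ⟶ ⊤_ C, k ≫ p = r := (Subobject.mk_factors_iff p r).mp h
  rw [← hk, terminal.hom_ext k (𝟙 _), Category.id_comp]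

theorem exists_point_of_not_isBotIn (hpt : EnoughPoints C) {X : C} {S : Subobject X}
    (hS : ¬ IsBotIn S) : ∃ p : ⊤_ C ⟶ X, S.Factors p := by
  obtain ⟨s⟩ := hpt _ fun hi => hS (isBotIn_of_isInitial hi)
  exact ⟨s.section_ ≫ S.arrow, Subobject.factors_comp_arrow _⟩

theorem factors_of_not_isBotIn_pullback [HasPullbacks C] (hpt : EnoughPoints C) {X : C}
    {S : Subobject X} {p : ⊤_ C ⟶ X} (h : ¬ IsBotIn ((Subobject.pullback p).obj S)) :
    S.Factors p := by
  obtain ⟨r, hr⟩ := exists_point_of_not_isBotIn hpt h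
  rw [terminal.hom_ext r (𝟙 _), pullback_factors_iff, Category.id_comp] at hr
  exact hr

end Points

section Coherent

variable [HasFiniteLimits C] [CoherentJoins C]

theorem isBotIn_top_of_isBotIn_top_terminal (h : IsBotIn (⊤ : Subobject (⊤_ C))) (W : C) :
    IsBotIn (⊤ : Subobject W) := by
  simpa only [Subobject.pullback_top] using CoherentJoins.pullback_bot (terminal.from W) _ h

-- If `⊤` were the least subobject of `1`, all hom-sets would be subsingletons and `1` initial.
theorem not_isBotIn_top_terminal (hnt : NonTrivialCat C) :
    ¬ IsBotIn (⊤ : Subobject (⊤_ C)) := by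
  intro h
  have hall := isBotIn_top_of_isBotIn_top_terminal h
  have hto : ∀ W : C, ∃ s : ⊤_ C ⟶ W, s ≫ terminal.from W = 𝟙 _ := fun W =>
    have : Mono (terminal.from W) := ⟨fun _ _ _ => eq_of_forall_isBotIn_top hall _ _⟩
    exists_comp_eq_id_of_isBotIn_top h _
  exact hnt _ (IsInitial.ofUniqueHom (fun W => (hto W).choose)
    fun _ _ => eq_of_forall_isBotIn_top hall _ _) terminalIsTerminal

theorem not_factors_of_isBotIn (hnt : NonTrivialCat C) {X : C} {b : Subobject X}
    (hb : IsBotIn b) (p : ⊤_ C ⟶ X) : ¬ b.Factors p := fun hp =>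
  not_isBotIn_top_terminal hnt <|
    (pullback_eq_top_iff_factors p b).mpr hp ▸ CoherentJoins.pullback_bot p b hb

theorem factors_or_factors_of_isLUB (hnt : NonTrivialCat C) (hpt : EnoughPoints C) {X : C}
    {S T U : Subobject X} (hU : IsLUB {S, T} U) {p : ⊤_ C ⟶ X} (hp : U.Factors p) :
    S.Factors p ∨ T.Factors p := by
  by_contra! h
  have hS : IsBotIn ((Subobject.pullback p).obj S) := by
    by_contra hS; exact h.1 (factors_of_not_isBotIn_pullback hpt hS)
  have hT : IsBotIn ((Subobject.pullback p).obj T) := by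
    by_contra hT; exact h.2 (factors_of_not_isBotIn_pullback hpt hT)
  apply not_isBotIn_top_terminal hnt
  rw [← (pullback_eq_top_iff_factors p U).mpr hp]
  exact isBotIn_of_isLUB_pair (CoherentJoins.pullback_sup p S T U hU) hS hT

end Coherent

section Complemented

theorem isComplementedSub_of_isBotIn {X : C} {b : Subobject X} (hb : IsBotIn b) :
    IsComplementedSub b := by
  refine ⟨⊤, b, ⟨?_, fun S hS => hS (Set.mem_insert _ _)⟩, hb,
    ⟨?_, fun S hS => hS (Set.mem_insert_of_mem _ rfl)⟩⟩
  · rintro S (rfl | rfl); exacts [le_rfl, le_top]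
  · rintro S (rfl | rfl); exacts [hb ⊤, le_rfl]

theorem IsComplementedSub.symm {X : C} {S T m : Subobject X} (hm : IsGLB {S, T} m)
    (hmbot : IsBotIn m) (hST : IsLUB {S, T} ⊤) : IsComplementedSub T :=
  ⟨S, m, by rwa [Set.pair_comm], hmbot, by rwa [Set.pair_comm]⟩

variable [HasPullbacks C] [CoherentJoins C]

theorem isLUB_inf_pair {X : C} (S : Subobject X) {T T' U : Subobject X}
    (h : IsLUB {T, T'} U) : IsLUB {S ⊓ T, S ⊓ T'} (S ⊓ U) := by
  induction S using Subobject.ind with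
  | h m =>
    have hmap : ∀ V : Subobject X, Subobject.mk m ⊓ V =
        (Subobject.map m).obj ((Subobject.pullback m).obj V) := fun V =>
      Subobject.inf_eq_map_pullback' (MonoOver.mk m) V
    have himg := (Subobject.mapPullbackAdj m).gc.isLUB_l_image
      (CoherentJoins.pullback_sup m T T' U h)
    rwa [Set.image_pair, ← hmap, ← hmap, ← hmap] at himg

theorem isComplementedSub_top (X : C) : IsComplementedSub (⊤ : Subobject X) := by
  obtain ⟨b, hb⟩ := CoherentJoins.exists_bot X
  refine ⟨b, b, ⟨?_, fun S hS => hS (Set.mem_insert_of_mem _ rfl)⟩, hb,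
    ⟨?_, fun S hS => hS (Set.mem_insert _ _)⟩⟩
  · rintro S (rfl | rfl); exacts [le_top, le_rfl]
  · rintro S (rfl | rfl); exacts [le_rfl, le_top]

-- The complement of `S ⊓ T` is the join of the complements, by distributivity.
theorem IsComplementedSub.inf {X : C} {S T : Subobject X} (hS : IsComplementedSub S)
    (hT : IsComplementedSub T) : IsComplementedSub (S ⊓ T) := by
  obtain ⟨S', mS, hmS, hmSbot, hSS'⟩ := hS
  obtain ⟨T', mT, hmT, hmTbot, hTT'⟩ := hT
  obtain ⟨U, hU⟩ := CoherentJoins.exists_sup S' T'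
  rw [hmS.unique isGLB_pair] at hmSbot
  rw [hmT.unique isGLB_pair] at hmTbot
  refine ⟨U, (S ⊓ T) ⊓ U, isGLB_pair, ?_, ⟨?_, fun V hV => ?_⟩⟩
  · refine isBotIn_of_isLUB_pair (isLUB_inf_pair (S ⊓ T) hU) ?_ ?_
    · exact isBotIn_of_le (inf_le_inf_right _ inf_le_left) hmSbot
    · exact isBotIn_of_le (inf_le_inf_right _ inf_le_right) hmTbot
  · rintro V (rfl | rfl) <;> exact le_top
  have hSTV : S ⊓ T ≤ V := hV (Set.mem_insert _ _)
  have hUV : U ≤ V := hV (Set.mem_insert_of_mem _ rfl)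
  have hS'V : S' ≤ V := (hU.1 (Set.mem_insert _ _)).trans hUV
  have hT'V : T' ≤ V := (hU.1 (Set.mem_insert_of_mem _ rfl)).trans hUV
  have hSV : S ≤ V := by
    have hd := isLUB_inf_pair S hTT'
    rw [inf_top_eq] at hd
    refine hd.2 ?_
    rintro W (rfl | rfl); exacts [hSTV, inf_le_right.trans hT'V]
  refine hSS'.2 ?_
  rintro W (rfl | rfl); exacts [hSV, hS'V]

end Complemented

section PosetComplemented

/-- Complementedness in a mere poset (Mathlib's `IsCompl` needs a bounded lattice): the filters of
`CenterFilter X` only form a partial order. -/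
def PosetComplemented {α : Type*} [Preorder α] (a : α) : Prop :=
  ∃ b m M : α, IsGLB {a, b} m ∧ IsBot m ∧ IsLUB {a, b} M ∧ IsTop M

theorem posetComplemented_iff {X : C} {S : Subobject X} :
    PosetComplemented S ↔ IsComplementedSub S := by
  constructor
  · rintro ⟨T, m, M, hm, hmbot, hM, hMtop⟩
    exact ⟨T, m, hm, hmbot, top_le_iff.mp (hMtop ⊤) ▸ hM⟩
  · rintro ⟨T, m, hm, hmbot, hST⟩
    exact ⟨T, m, ⊤, hm, hmbot, hST, isTop_top⟩

theorem PosetComplemented.map {α β : Type*} [PartialOrder α] [PartialOrder β] {a : α}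
    (h : PosetComplemented a) (e : α ≃o β) : PosetComplemented (e a) := by
  obtain ⟨b, m, M, hm, hmbot, hM, hMtop⟩ := h
  refine ⟨e b, e m, e M, ?_, fun x => ?_, ?_, fun x => ?_⟩
  · simpa only [Set.image_pair] using e.isGLB_image'.mpr hm
  · simpa using e.monotone (hmbot (e.symm x))
  · simpa only [Set.image_pair] using e.isLUB_image'.mpr hM
  · simpa using e.monotone (hMtop (e.symm x))

end PosetComplemented

namespace CenterFilter

variable [HasPullbacks C] {X : C}

theorem inf_mem' (F : CenterFilter X) {S T : Subobject X} (hS : S ∈ F.carrier)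
    (hT : T ∈ F.carrier) : S ⊓ T ∈ F.carrier :=
  F.inf_mem S hS T hT _ isGLB_pair

variable [CoherentJoins C]

theorem top_mem (F : CenterFilter X) : (⊤ : Subobject X) ∈ F.carrier := by
  obtain ⟨S, hS⟩ := F.nonempty
  exact F.mem_of_le S hS ⊤ (isComplementedSub_top X) le_top

def principal (S : Subobject X) : CenterFilter X where
  carrier := {T | IsComplementedSub T ∧ S ≤ T}
  mem_complemented _ hT := hT.1
  nonempty := ⟨⊤, isComplementedSub_top X, le_top⟩
  inf_mem _ hT _ hT' _ hm := (hm.unique isGLB_pair) ▸ ⟨hT.1.inf hT'.1, le_inf hT.2 hT'.2⟩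
  mem_of_le _ hT _ hU hTU := ⟨hU, hT.2.trans hTU⟩

theorem le_principal_iff (F : CenterFilter X) {S : Subobject X} (hS : IsComplementedSub S) :
    F ≤ principal S ↔ S ∈ F.carrier :=
  ⟨fun h => h ⟨hS, le_rfl⟩, fun h _ hT => F.mem_of_le S h _ hT.1 hT.2⟩

theorem posetComplemented_principal {S : Subobject X} (hS : IsComplementedSub S) :
    PosetComplemented (principal S) := by
  obtain ⟨S', m, hm, hmbot, hSS'⟩ := id hS
  have hS' : IsComplementedSub S' := IsComplementedSub.symm hm hmbot hSS'
  rw [hm.unique isGLB_pair] at hmbot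
  refine ⟨principal S', principal (S ⊓ S'), principal ⊤, ⟨?_, fun H hH T hT => ?_⟩,
    fun G T hT => ⟨G.mem_complemented T hT, hmbot T⟩, ⟨?_, fun V hV T hT => ?_⟩,
    fun G T hT => G.mem_of_le ⊤ G.top_mem T hT.1 hT.2⟩
  · rintro F (rfl | rfl) <;> intro T hT
    exacts [⟨hT.1, inf_le_left.trans hT.2⟩, ⟨hT.1, inf_le_right.trans hT.2⟩]
  · have hSH := (le_principal_iff H hS).mp (hH (Set.mem_insert _ _))
    have hS'H := (le_principal_iff H hS').mp (hH (Set.mem_insert_of_mem _ rfl))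
    exact H.mem_of_le _ (H.inf_mem' hSH hS'H) T hT.1 (hmbot T)
  · rintro F (rfl | rfl) <;> exact fun T hT => ⟨hT.1, le_top.trans hT.2⟩
  · refine ⟨V.mem_complemented T hT, hSS'.2 ?_⟩
    rintro U (rfl | rfl)
    exacts [(hV (Set.mem_insert _ _) hT).2, (hV (Set.mem_insert_of_mem _ rfl) hT).2]

def generate (𝔉 : Set (CenterFilter X)) : CenterFilter X where
  carrier := {T | IsComplementedSub T ∧ ∃ s : Finset (Subobject X),
    (∀ S ∈ s, ∃ F ∈ 𝔉, S ∈ F.carrier) ∧ s.inf id ≤ T}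
  mem_complemented _ hT := hT.1
  nonempty := ⟨⊤, isComplementedSub_top X, ∅, by simp, le_top⟩
  inf_mem := by
    classical
    rintro T ⟨hT, s, hs, hsT⟩ T' ⟨hT', s', hs', hsT'⟩ m hm
    rw [hm.unique isGLB_pair]
    refine ⟨hT.inf hT', s ∪ s', fun S hS => (Finset.mem_union.mp hS).elim (hs S) (hs' S), ?_⟩
    rw [Finset.inf_union]
    exact inf_le_inf hsT hsT'
  mem_of_le _ hT _ hU hTU := ⟨hU, hT.2.imp fun _ h => ⟨h.1, h.2.trans hTU⟩⟩

theorem isGLB_generate (𝔉 : Set (CenterFilter X)) : IsGLB 𝔉 (generate 𝔉) := by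
  refine ⟨fun F hF T hT => ⟨F.mem_complemented T hT, {T}, by simpa using ⟨F, hF, hT⟩, by simp⟩,
    fun H hH T ⟨hT, s, hs, hsT⟩ => H.mem_of_le _ ?_ T hT hsT⟩
  refine Finset.inf_induction H.top_mem (fun _ h₁ _ h₂ => H.inf_mem' h₁ h₂) fun S hS => ?_
  obtain ⟨F, hF, hSF⟩ := hs S hS
  exact hH hF hSF

theorem exists_inf_le_of_mem_generate_pair {F G : CenterFilter X} {T : Subobject X}
    (hT : T ∈ (generate {F, G}).carrier) : ∃ a ∈ F.carrier, ∃ b ∈ G.carrier, a ⊓ b ≤ T := by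
  obtain ⟨-, s, hs, hsT⟩ := hT
  obtain ⟨a, ha, b, hb, hab⟩ : ∃ a ∈ F.carrier, ∃ b ∈ G.carrier, a ⊓ b ≤ s.inf id := by
    refine Finset.inf_induction (p := fun z => ∃ a ∈ F.carrier, ∃ b ∈ G.carrier, a ⊓ b ≤ z)
      ⟨⊤, F.top_mem, ⊤, G.top_mem, le_top⟩ ?_ fun S hS => ?_
    · rintro _ ⟨a₁, ha₁, b₁, hb₁, h₁⟩ _ ⟨a₂, ha₂, b₂, hb₂, h₂⟩
      exact ⟨a₁ ⊓ a₂, F.inf_mem' ha₁ ha₂, b₁ ⊓ b₂, G.inf_mem' hb₁ hb₂,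
        le_inf ((inf_le_inf inf_le_left inf_le_left).trans h₁)
          ((inf_le_inf inf_le_right inf_le_right).trans h₂)⟩
    · obtain ⟨_, rfl | rfl, hS⟩ := hs S hS
      exacts [⟨S, hS, ⊤, G.top_mem, inf_le_left⟩, ⟨⊤, F.top_mem, S, hS, inf_le_right⟩]
  exact ⟨a, ha, b, hb, hab.trans hsT⟩

theorem exists_mem_of_mem_generate {𝔉 : Set (CenterFilter X)} (hne : 𝔉.Nonempty)
    (hdir : DirectedOn (· ≥ ·) 𝔉) {T : Subobject X} (hT : T ∈ (generate 𝔉).carrier) :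
    ∃ F ∈ 𝔉, T ∈ F.carrier := by
  obtain ⟨hTc, s, hs, hsT⟩ := hT
  obtain ⟨F, hF, hsF⟩ : ∃ F ∈ 𝔉, s.inf id ∈ F.carrier := by
    refine Finset.inf_induction (p := fun z => ∃ F ∈ 𝔉, z ∈ F.carrier)
      (hne.imp fun F hF => ⟨hF, F.top_mem⟩) ?_ hs
    rintro _ ⟨F₁, hF₁, h₁⟩ _ ⟨F₂, hF₂, h₂⟩
    obtain ⟨H, hH, hH₁, hH₂⟩ := hdir F₁ hF₁ F₂ hF₂
    exact ⟨H, hH, H.inf_mem' (hH₁ h₁) (hH₂ h₂)⟩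
  exact ⟨F, hF, F.mem_of_le _ hsF T hTc hsT⟩

end CenterFilter

section FiltralObject

open CenterFilter

variable [HasPullbacks C] [CoherentJoins C] {X : C}

theorem isBotIn_iff_mem_apply (e : Subobject X ≃o CenterFilter X) {b : Subobject X}
    (hb : IsBotIn b) {A : Subobject X} : IsBotIn A ↔ b ∈ (e A).carrier := by
  refine ⟨fun hA => ((e A).le_principal_iff (isComplementedSub_of_isBotIn hb)).mp
    (e.le_symm_apply.mp (hA _)), fun h S => e.le_iff_le.mp fun T hT => ?_⟩
  exact (e A).mem_of_le b h T ((e S).mem_complemented T hT) (hb T)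

theorem le_symm_principal_iff (e : Subobject X ≃o CenterFilter X) {S A : Subobject X}
    (hS : IsComplementedSub S) : A ≤ e.symm (principal S) ↔ S ∈ (e A).carrier :=
  e.le_symm_apply.trans ((e A).le_principal_iff hS)

theorem apply_eq_generate (e : Subobject X ≃o CenterFilter X) {s : Set (Subobject X)}
    {m : Subobject X} (hm : IsGLB s m) : e m = generate (e '' s) :=
  (e.isGLB_image'.mpr hm).unique (isGLB_generate _)

theorem FiltralObject.monoCompleteAt (hX : FiltralObject X) : MonoCompleteAt X := fun s =>
  let ⟨e⟩ := hX
  ⟨e.symm (generate (e '' s)), e.isGLB_image.mp (isGLB_generate _)⟩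

theorem FiltralObject.exists_complemented_separation (hX : FiltralObject X)
    {A B : Subobject X} (hAB : IsBotIn (A ⊓ B)) :
    ∃ P Q : Subobject X, IsComplementedSub P ∧ IsComplementedSub Q ∧ A ≤ P ∧ B ≤ Q ∧
      IsBotIn (P ⊓ Q) := by
  obtain ⟨e⟩ := hX
  obtain ⟨b, hb⟩ := CoherentJoins.exists_bot X
  have hmem := (isBotIn_iff_mem_apply e hb).mp hAB
  rw [apply_eq_generate e isGLB_pair, Set.image_pair] at hmem
  obtain ⟨a, ha, a', ha', haa'⟩ := exists_inf_le_of_mem_generate_pair hmem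
  have hac := (e A).mem_complemented a ha
  have hac' := (e B).mem_complemented a' ha'
  have hcompl : ∀ {S : Subobject X}, IsComplementedSub S →
      IsComplementedSub (e.symm (principal S)) := fun hS =>
    posetComplemented_iff.mp ((posetComplemented_principal hS).map e.symm)
  set P := e.symm (principal a)
  set Q := e.symm (principal a')
  refine ⟨P, Q, hcompl hac, hcompl hac',
    (le_symm_principal_iff e hac).mpr ha, (le_symm_principal_iff e hac').mpr ha',
    (isBotIn_iff_mem_apply e hb).mpr ?_⟩
  have h₁ : a ∈ (e (P ⊓ Q)).carrier := (le_symm_principal_iff e hac).mp inf_le_left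
  have h₂ : a' ∈ (e (P ⊓ Q)).carrier := (le_symm_principal_iff e hac').mp inf_le_right
  exact (e _).mem_of_le _ ((e _).inf_mem' h₁ h₂) b (isComplementedSub_of_isBotIn hb) haa'

theorem FiltralObject.not_isBotIn_of_isGLB (hX : FiltralObject X) {s : Set (Subobject X)}
    (hne : s.Nonempty) (hdir : DirectedOn (· ≥ ·) s) (hs : ∀ A ∈ s, ¬ IsBotIn A)
    {m : Subobject X} (hm : IsGLB s m) : ¬ IsBotIn m := by
  obtain ⟨e⟩ := hX
  obtain ⟨b, hb⟩ := CoherentJoins.exists_bot X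
  intro hmbot
  have hmem := (isBotIn_iff_mem_apply e hb).mp hmbot
  rw [apply_eq_generate e hm] at hmem
  have hdir' : DirectedOn (· ≥ ·) (e '' s) := by
    rintro _ ⟨A, hA, rfl⟩ _ ⟨A', hA', rfl⟩
    obtain ⟨B, hB, hBA, hBA'⟩ := hdir A hA A' hA'
    exact ⟨e B, ⟨B, hB, rfl⟩, e.monotone hBA, e.monotone hBA'⟩
  obtain ⟨_, ⟨A, hA, rfl⟩, hbA⟩ := exists_mem_of_mem_generate (hne.image e) hdir' hmem
  exact hs A hA ((isBotIn_iff_mem_apply e hb).mpr hbA)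

end FiltralObject

section Images

variable [HasImages C]

theorem imageSubobject_le_iff {A X : C} (f : A ⟶ X) (T : Subobject X) :
    imageSubobject f ≤ T ↔ T.Factors f :=
  ⟨fun h => Subobject.factors_of_le f h
      ((Subobject.factors_iff _ _).mpr ⟨factorThruImageSubobject f, imageSubobject_arrow_comp f⟩),
    fun h => imageSubobject_le f (T.factorThru f h) (T.factorThru_arrow f h)⟩

theorem imageSubobject_eq_top_of_strongEpi {X Y : C} (f : X ⟶ Y) [StrongEpi f] :
    imageSubobject f = ⊤ := by
  have : StrongEpi (factorThruImageSubobject f ≫ (imageSubobject f).arrow) := by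
    rwa [imageSubobject_arrow_comp]
  have := strongEpi_of_strongEpi (factorThruImageSubobject f) (imageSubobject f).arrow
  have := isIso_of_mono_of_strongEpi (imageSubobject f).arrow
  exact Subobject.eq_top_of_isIso_arrow _

noncomputable def directImage {Y Z : C} (q : Y ⟶ Z) (S : Subobject Y) : Subobject Z :=
  imageSubobject (S.arrow ≫ q)

theorem factors_directImage {Y Z W : C} (q : Y ⟶ Z) {S : Subobject Y} {u : W ⟶ Y}
    (h : S.Factors u) : (directImage q S).Factors (u ≫ q) := by
  rw [← Subobject.factorThru_arrow S u h, Category.assoc]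
  exact Subobject.factors_of_factors_right _ ((imageSubobject_le_iff _ _).mp le_rfl)

variable [HasPullbacks C]

theorem gc_directImage {Y Z : C} (q : Y ⟶ Z) :
    GaloisConnection (directImage q) (Subobject.pullback q).obj := fun S T => by
  rw [directImage, imageSubobject_le_iff, ← pullback_factors_iff, factors_iff_mk_le,
    Subobject.mk_arrow]

theorem le_imageSubobject_comp {P A X : C} (k : P ⟶ A) (hk : imageSubobject k = ⊤) (m : A ⟶ X)
    [Mono m] : Subobject.mk m ≤ imageSubobject (k ≫ m) := by
  rw [← factors_iff_mk_le, ← pullback_eq_top_iff_factors, ← top_le_iff, ← hk,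
    imageSubobject_le_iff, pullback_factors_iff, ← imageSubobject_le_iff]

end Images

section StableImages

variable [HasFiniteLimits C] [HasImages C] [StableImages C]

theorem le_directImage_pullback {Y Z : C} (q : Y ⟶ Z)
    (hq : imageSubobject q = ⊤) (T : Subobject Z) :
    T ≤ directImage q ((Subobject.pullback q).obj T) := by
  have hk : imageSubobject (pullback.snd q T.arrow) = ⊤ := by
    rw [← StableImages.image_pullback, hq, Subobject.pullback_top]
  have hfst : ((Subobject.pullback q).obj T).Factors (pullback.fst q T.arrow) := by
    rw [pullback_factors_iff, pullback.condition]
    exact Subobject.factors_comp_arrow _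
  calc T = Subobject.mk T.arrow := (Subobject.mk_arrow T).symm
    _ ≤ imageSubobject (pullback.snd q T.arrow ≫ T.arrow) := le_imageSubobject_comp _ hk _
    _ = imageSubobject (((Subobject.pullback q).obj T).factorThru _ hfst ≫
          ((Subobject.pullback q).obj T).arrow ≫ q) := by
      rw [← Category.assoc, Subobject.factorThru_arrow, pullback.condition]
    _ ≤ directImage q _ := imageSubobject_comp_le _ _

theorem MonoCompleteAt.of_cover {Y Z : C} (q : Y ⟶ Z)
    (hq : imageSubobject q = ⊤) (hY : MonoCompleteAt Y) : MonoCompleteAt Z := by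
  intro s
  obtain ⟨m, hm⟩ := hY ((Subobject.pullback q).obj '' s)
  refine ⟨directImage q m, fun A hA => (gc_directImage q).l_le (hm.1 ⟨A, hA, rfl⟩),
    fun T hT => (le_directImage_pullback q hq T).trans ((gc_directImage q).monotone_l (hm.2 ?_))⟩
  rintro _ ⟨A, hA, rfl⟩
  exact (Subobject.pullback q).monotone (hT hA)

-- The pullback of `g` along `z` has `⊤` as image, so it is not initial and thus has a point.
theorem exists_lift_of_factors_imageSubobject [CoherentJoins C]
    (hnt : NonTrivialCat C) (hpt : EnoughPoints C) {Y Z : C} (g : Y ⟶ Z) {z : ⊤_ C ⟶ Z}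
    (hz : (imageSubobject g).Factors z) : ∃ y : ⊤_ C ⟶ Y, y ≫ g = z := by
  have himg : imageSubobject (pullback.snd g z) = ⊤ := by
    rw [← StableImages.image_pullback, pullback_eq_top_iff_factors]
    exact hz
  obtain ⟨s⟩ := hpt (pullback g z) fun hi => not_isBotIn_top_terminal hnt <|
    himg ▸ fun S => imageSubobject_le _ (hi.to _) (hi.hom_ext _ _)
  refine ⟨s.section_ ≫ pullback.fst g z, ?_⟩
  rw [Category.assoc, pullback.condition, ← Category.assoc,
    terminal.hom_ext (s.section_ ≫ pullback.snd g z) (𝟙 _), Category.id_comp]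

end StableImages

section Spec

variable {X : C}

section

variable [HasTerminal C]

theorem isGLB_Cg (hX : MonoCompleteAt X) (T : Set (⊤_ C ⟶ X)) :
    IsGLB {S : Subobject X | ∀ p ∈ T, S.Factors p} (Cg T) := by
  rw [Cg, dif_pos (hX _)]
  exact Exists.choose_spec _

theorem gc_Cg_Vs (hX : MonoCompleteAt X) :
    GaloisConnection (Cg : Set (⊤_ C ⟶ X) → Subobject X) Vs := fun T S => by
  refine ⟨fun h p hp => Subobject.factors_of_le p h ?_, fun h => (isGLB_Cg hX T).1 h⟩
  exact (factors_iff_mk_le p).mpr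
    ((isGLB_Cg hX T).2 fun S hS => (factors_iff_mk_le p).mp (hS p hp))

theorem subset_cl (hX : MonoCompleteAt X) (T : Set (⊤_ C ⟶ X)) : T ⊆ cl T :=
  (gc_Cg_Vs hX).le_u_l T

theorem cl_Vs (hX : MonoCompleteAt X) (S : Subobject X) : cl (Vs S) = Vs S :=
  (gc_Cg_Vs hX).u_l_u_eq_u S

theorem cl_sInter (hX : MonoCompleteAt X) {A : Set (Set (⊤_ C ⟶ X))}
    (hA : ∀ T ∈ A, cl T = T) : cl (⋂₀ A) = ⋂₀ A := by
  refine (subset_cl hX _).antisymm' fun p hp T hT => hA T hT ▸ ?_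
  exact (gc_Cg_Vs hX).monotone_u ((gc_Cg_Vs hX).monotone_l (Set.sInter_subset_of_mem hT)) hp

end

variable [HasFiniteLimits C] [CoherentJoins C]

theorem cl_empty (hnt : NonTrivialCat C) (hX : MonoCompleteAt X) :
    cl (∅ : Set (⊤_ C ⟶ X)) = ∅ :=
  Set.eq_empty_iff_forall_notMem.mpr fun p =>
    not_factors_of_isBotIn hnt (fun _ => (gc_Cg_Vs hX).l_le (Set.empty_subset _)) p

theorem cl_union (hnt : NonTrivialCat C) (hpt : EnoughPoints C) (hX : MonoCompleteAt X)
    {T T' : Set (⊤_ C ⟶ X)} (hT : cl T = T) (hT' : cl T' = T') : cl (T ∪ T') = T ∪ T' := by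
  refine (subset_cl hX _).antisymm' fun p hp => ?_
  obtain ⟨U, hU⟩ := CoherentJoins.exists_sup (Cg T) (Cg T')
  have hle : Cg (T ∪ T') ≤ U := (gc_Cg_Vs hX).l_le <| Set.union_subset
    ((subset_cl hX T).trans ((gc_Cg_Vs hX).monotone_u (hU.1 (Set.mem_insert _ _))))
    ((subset_cl hX T').trans ((gc_Cg_Vs hX).monotone_u (hU.1 (Set.mem_insert_of_mem _ rfl))))
  rw [← hT, ← hT']
  exact factors_or_factors_of_isLUB hnt hpt hU (Subobject.factors_of_le p hle hp)

abbrev specTopology (hnt : NonTrivialCat C) (hpt : EnoughPoints C) (hX : MonoCompleteAt X) :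
    TopologicalSpace (⊤_ C ⟶ X) :=
  TopologicalSpace.ofClosed {T | cl T = T} (cl_empty hnt hX) (fun _ hA => cl_sInter hX hA)
    fun _ hT _ hT' => cl_union hnt hpt hX hT hT'

theorem isClosed_specTopology_iff (hnt : NonTrivialCat C) (hpt : EnoughPoints C)
    (hX : MonoCompleteAt X) (T : Set (⊤_ C ⟶ X)) :
    @IsClosed _ (specTopology hnt hpt hX) T ↔ cl T = T := by
  let := specTopology hnt hpt hX
  rw [← isOpen_compl_iff]
  change cl Tᶜᶜ = Tᶜᶜ ↔ cl T = T
  rw [compl_compl]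

end Spec

section FiltralCover

variable [HasFiniteLimits C] [HasImages C] [StableImages C] [CoherentJoins C] {X₀ X : C}
  (q : X₀ ⟶ X)

theorem not_factors_directImage (hnt : NonTrivialCat C) (hpt : EnoughPoints C)
    {R : Subobject X₀} {x : ⊤_ C ⟶ X}
    (h : IsBotIn (R ⊓ (Subobject.pullback q).obj (Subobject.mk x))) :
    ¬ (directImage q R).Factors x := by
  intro hx
  obtain ⟨y, hy⟩ := exists_lift_of_factors_imageSubobject hnt hpt (R.arrow ≫ q) hx
  refine not_factors_of_isBotIn hnt h (y ≫ R.arrow)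
    ((Subobject.inf_factors _).mpr ⟨Subobject.factors_comp_arrow y, ?_⟩)
  rw [pullback_factors_iff, Category.assoc, hy]
  exact Subobject.mk_factors_self x

theorem exists_point_factors_forall (hnt : NonTrivialCat C) (hpt : EnoughPoints C)
    (hq : imageSubobject q = ⊤) (hX₀ : FiltralObject X₀) {ι : Type*} (S : ι → Subobject X)
    (hS : ∀ u : Finset ι, ∃ p : ⊤_ C ⟶ X, (u.inf S).Factors p) :
    ∃ p : ⊤_ C ⟶ X, ∀ i, (S i).Factors p := by
  classical
  set s := Set.range fun u : Finset ι => (Subobject.pullback q).obj (u.inf S)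
  have hdir : DirectedOn (· ≥ ·) s := by
    rintro _ ⟨u, rfl⟩ _ ⟨v, rfl⟩
    exact ⟨_, ⟨u ∪ v, rfl⟩,
      (Subobject.pullback q).monotone (Finset.inf_mono Finset.subset_union_left),
      (Subobject.pullback q).monotone (Finset.inf_mono Finset.subset_union_right)⟩
  have hs : ∀ A ∈ s, ¬ IsBotIn A := by
    rintro _ ⟨u, rfl⟩ hbot
    obtain ⟨p, hp⟩ := hS u
    obtain ⟨p₀, rfl⟩ := exists_lift_of_factors_imageSubobject hnt hpt q
      (hq ▸ Subobject.top_factors p)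
    exact not_factors_of_isBotIn hnt hbot p₀ ((pullback_factors_iff q _ p₀).mpr hp)
  obtain ⟨m, hm⟩ := hX₀.monoCompleteAt s
  obtain ⟨p₀, hp₀⟩ := exists_point_of_not_isBotIn hpt
    (hX₀.not_isBotIn_of_isGLB (Set.range_nonempty _) hdir hs hm)
  refine ⟨p₀ ≫ q, fun i => ?_⟩
  simpa using (pullback_factors_iff q _ p₀).mp (Subobject.factors_of_le p₀ (hm.1 ⟨{i}, rfl⟩) hp₀)

theorem exists_separating_subobjects (hnt : NonTrivialCat C) (hpt : EnoughPoints C)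
    (hq : imageSubobject q = ⊤) (hX₀ : FiltralObject X₀) {x y : ⊤_ C ⟶ X} (hxy : x ≠ y) :
    ∃ S T : Subobject X, ¬ S.Factors x ∧ ¬ T.Factors y ∧
      ∀ z : ⊤_ C ⟶ X, S.Factors z ∨ T.Factors z := by
  set A := (Subobject.pullback q).obj (Subobject.mk x)
  set B := (Subobject.pullback q).obj (Subobject.mk y)
  have hAB : IsBotIn (A ⊓ B) := by
    by_contra h
    obtain ⟨z, hz⟩ := exists_point_of_not_isBotIn hpt h
    rw [Subobject.inf_factors, pullback_factors_iff, pullback_factors_iff, mk_factors_point_iff,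
      mk_factors_point_iff] at hz
    exact hxy (hz.1.symm.trans hz.2)
  obtain ⟨P, Q, ⟨P', m, hm, hmbot, hPP'⟩, -, hAP, hBQ, hPQ⟩ :=
    hX₀.exists_complemented_separation hAB
  rw [hm.unique isGLB_pair] at hmbot
  refine ⟨directImage q P', directImage q P, not_factors_directImage q hnt hpt ?_,
    not_factors_directImage q hnt hpt ?_, fun z => ?_⟩
  · exact isBotIn_of_le (le_inf (inf_le_right.trans hAP) inf_le_left) hmbot
  · exact isBotIn_of_le (inf_le_inf_left P hBQ) hPQ
  · obtain ⟨z₀, rfl⟩ := exists_lift_of_factors_imageSubobject hnt hpt q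
      (hq ▸ Subobject.top_factors z)
    exact (factors_or_factors_of_isLUB hnt hpt hPP' (Subobject.top_factors z₀)).symm.imp
      (factors_directImage q) (factors_directImage q)

theorem compactSpace_spec (hnt : NonTrivialCat C) (hpt : EnoughPoints C)
    (hq : imageSubobject q = ⊤) (hX₀ : FiltralObject X₀) (hX : MonoCompleteAt X) :
    @CompactSpace _ (specTopology hnt hpt hX) := by
  let := specTopology hnt hpt hX
  refine compactSpace_of_finite_subfamily_closed fun Z hZ hempty => ?_
  by_contra! hfin
  have hZ' : ∀ i, cl (Z i) = Z i := fun i => (isClosed_specTopology_iff hnt hpt hX _).mp (hZ i)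
  obtain ⟨p, hp⟩ := exists_point_factors_forall q hnt hpt hq hX₀ (fun i => Cg (Z i)) fun u => by
    obtain ⟨p, hp⟩ := hfin u
    exact ⟨p, (Subobject.finset_inf_factors p).mpr fun i hi =>
      subset_cl hX _ (Set.mem_iInter₂.mp hp i hi)⟩
  exact (Set.eq_empty_iff_forall_notMem.mp hempty) p (Set.mem_iInter.mpr fun i => hZ' i ▸ hp i)

theorem t2Space_spec (hnt : NonTrivialCat C) (hpt : EnoughPoints C)
    (hq : imageSubobject q = ⊤) (hX₀ : FiltralObject X₀) (hX : MonoCompleteAt X) :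
    @T2Space _ (specTopology hnt hpt hX) := by
  let := specTopology hnt hpt hX
  have hopen : ∀ S : Subobject X, IsOpen (Vs S)ᶜ := fun S =>
    ((isClosed_specTopology_iff hnt hpt hX _).mpr (cl_Vs hX S)).isOpen_compl
  refine ⟨fun x y hxy => ?_⟩
  obtain ⟨S, T, hxS, hyT, hST⟩ := exists_separating_subobjects q hnt hpt hq hX₀ hxy
  refine ⟨(Vs S)ᶜ, (Vs T)ᶜ, hopen S, hopen T, hxS, hyT, ?_⟩
  exact Set.disjoint_compl_left_iff_subset.mpr fun z hz => (hST z).resolve_right hz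

end FiltralCover

theorem spec_compactHausdorff_general
    [HasFiniteLimits C] [HasImages C] [StableImages C] [CoherentJoins C]
    (hnt : NonTrivialCat C) (hpt : EnoughPoints C)
    (hf : Filtral C) (X : C) :
    ∃ t : TopologicalSpace (⊤_ C ⟶ X),
      (∀ T : Set (⊤_ C ⟶ X), @IsClosed _ t T ↔ cl T = T) ∧
      @CompactSpace _ t ∧ @T2Space _ t := by
  obtain ⟨X₀, q, ⟨hq⟩, hX₀⟩ := hf X
  have : StrongEpi q := by have := hq.effectiveEpi; infer_instance
  have hqtop := imageSubobject_eq_top_of_strongEpi q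
  have hX : MonoCompleteAt X := .of_cover q hqtop hX₀.monoCompleteAt
  exact ⟨specTopology hnt hpt hX, isClosed_specTopology_iff hnt hpt hX,
    compactSpace_spec q hnt hpt hqtop hX₀ hX, t2Space_spec q hnt hpt hqtop hX₀ hX⟩

/-- If `𝒳` is filtral then `Spec X` is a compact Hausdorff space for every `X`. -/
theorem spec_compactHausdorff
    [WellPowered.{v} C] [HasFiniteLimits C] [HasImages C] [StableImages C] [CoherentJoins C]
    (hnt : NonTrivialCat C) (hwp : WellPointed C) (hpt : EnoughPoints C)
    (hf : Filtral C) (X : C) :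
    ∃ t : TopologicalSpace (⊤_ C ⟶ X),
      (∀ T : Set (⊤_ C ⟶ X), @IsClosed _ t T ↔ cl T = T) ∧
      @CompactSpace _ t ∧ @T2Space _ t :=
  spec_compactHausdorff_general hnt hpt hf X

end Paper
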